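/- Let μ and ρ be equivalent (δ_μ = δ_ρ) mixed and randomized stopping times respectively. Then for every bounded jointly measurable payoff process R, E_{P⊗λ}[R_{μ(ω,r)}(ω)] = E_P[∫_0^T R_t(ω) dρ_t(ω)]; that is, equivalent random stopping times yield the same payoff in every stopping problem. -/

import Mathlib

/-!
The identity holds because the two sides are integrals of the same function `R` against two
measures on `Ω × ℝ`: the left side against `δ_μ`, the pushforward of `P ⊗ λ` under
`(ω, r) ↦ (ω, μ(ω, r))`, and the right side against `P ⊗ ν`. Both measures are concentrated
on `Ω × [0, T]`, and `δ_μ = δ_ρ` together with `ν_ω([0, t]) = ρ_t(ω)` says that they agree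
on the rectangles `A × [0, t]`. These rectangles and the conull set determine a finite measure
on `Ω × ℝ`, so the two measures coincide.
-/

open MeasureTheory Set

noncomputable section

namespace StopEquiv

variable {Ω : Type*} [MeasurableSpace Ω]

/-- Lebesgue measure on the unit interval `[0,1]`, as a measure on `ℝ`. -/
def lam : Measure ℝ := volume.restrict (Icc (0:ℝ) 1)

/-- The filtration `F` on the time interval `[0,T]` satisfies the usual conditions
(together with monotonicity and being a sub-σ-algebra of the ambient one):
right continuity and `F 0` containing all `P`-null sets. -/
def UsualConditions (P : Measure Ω) (F : ℝ → MeasurableSpace Ω) (T : ℝ) : Prop :=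
  (∀ s t : ℝ, s ≤ t → F s ≤ F t) ∧
  (∀ t : ℝ, F t ≤ (inferInstance : MeasurableSpace Ω)) ∧
  (∀ t ∈ Ico (0:ℝ) T, F t = ⨅ s ∈ Ioc t T, F s) ∧
  (∀ N : Set Ω, (∃ M, MeasurableSet M ∧ N ⊆ M ∧ P M = 0) → MeasurableSet[F 0] N)

/-- A pure stopping time with values in `[0,T]`. -/
def IsPureST (F : ℝ → MeasurableSpace Ω) (T : ℝ) (σ : Ω → ℝ) : Prop :=
  (∀ ω, σ ω ∈ Icc 0 T) ∧ ∀ t ∈ Icc (0:ℝ) T, MeasurableSet[F t] {ω | σ ω ≤ t}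

/-- A mixed stopping time (Definition of Baxter–Chacon): `{(ω,r) : μ(ω,r) ≤ t}` is
`F_t ⊗ B(ℝ)`-measurable for every `t ∈ [0,T]`. -/
def IsMixedST (F : ℝ → MeasurableSpace Ω) (T : ℝ) (μ : Ω → ℝ → ℝ) : Prop :=
  (∀ ω r, μ ω r ∈ Icc 0 T) ∧
  ∀ t ∈ Icc (0:ℝ) T,
    MeasurableSet[(F t).prod (borel ℝ)] {p : Ω × ℝ | μ p.1 p.2 ≤ t}

/-- The distribution stopping time `δ_μ` induced by a mixed stopping time: the
push-forward of `P ⊗ λ` under `(ω,r) ↦ (ω, μ(ω,r))`. -/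
def mixedDist (P : Measure Ω) (μ : Ω → ℝ → ℝ) : Measure (Ω × ℝ) :=
  (P.prod lam).map (fun p => (p.1, μ p.1 p.2))

/-- The section measure `δ^t(A) := δ(A × [0,t])`. -/
def secMeas (δ : Measure (Ω × ℝ)) (t : ℝ) : Measure Ω :=
  (δ.restrict (univ ×ˢ Icc 0 t)).map Prod.fst

/-- A randomized stopping time: an adapted `[0,1]`-valued process with
nondecreasing right-continuous paths and `ρ_T ≡ 1`. -/
def IsRandomizedST (F : ℝ → MeasurableSpace Ω) (T : ℝ) (ρ : ℝ → Ω → ℝ) : Prop :=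
  (∀ t ∈ Icc (0:ℝ) T, Measurable[F t] (ρ t)) ∧
  (∀ t ∈ Icc (0:ℝ) T, ∀ ω, ρ t ω ∈ Icc (0:ℝ) 1) ∧
  (∀ ω, MonotoneOn (fun t => ρ t ω) (Icc 0 T)) ∧
  (∀ ω, ∀ t ∈ Ico (0:ℝ) T, ContinuousWithinAt (fun s => ρ s ω) (Icc t T) t) ∧
  (∀ ω, ρ T ω = 1)

/-- `δ` is the distribution stopping time `δ_ρ` induced by the randomized stopping
time `ρ`, i.e. `δ(A × [0,t]) = ∫_A ρ_t dP` for all `A ∈ F` and `t ∈ [0,T]`. -/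
def IsRandDist (P : Measure Ω) (T : ℝ) (ρ : ℝ → Ω → ℝ) (δ : Measure (Ω × ℝ)) : Prop :=
  ∀ A : Set Ω, MeasurableSet A → ∀ t ∈ Icc (0:ℝ) T,
    δ (A ×ˢ Icc 0 t) = ∫⁻ ω in A, ENNReal.ofReal (ρ t ω) ∂P

/-- A distribution stopping time: a probability measure on `Ω × [0,T]` whose
`Ω`-marginal is `P` and such that the Radon–Nikodym derivative of `δ^t` w.r.t. `P`
is `F_t`-measurable (has an `F_t`-measurable version) for every `t ∈ [0,T]`. -/
def IsDistST (P : Measure Ω) (F : ℝ → MeasurableSpace Ω) (T : ℝ)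
    (δ : Measure (Ω × ℝ)) : Prop :=
  IsProbabilityMeasure δ ∧
  δ.map Prod.fst = P ∧
  δ {p : Ω × ℝ | p.2 ∈ Icc 0 T}ᶜ = 0 ∧
  ∀ t ∈ Icc (0:ℝ) T, ∃ g : Ω → ENNReal,
    Measurable[F t] g ∧ g =ᵐ[P] (secMeas δ t).rnDeriv P

/-- The mixed stopping time `μ(ω,r) = min{t ∈ [0,T] : ρ_t(ω) ≥ r}` built from a
randomized stopping time `ρ`. -/
def candidateMixed (T : ℝ) (ρ : ℝ → Ω → ℝ) : Ω → ℝ → ℝ :=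
  fun ω r => sInf {t | t ∈ Icc 0 T ∧ r ≤ ρ t ω}

/-- The payoff of a stopping game at the pair of stopping times `(t,s)`:
`X_t` if Player 1 stops first, `Y_s` if Player 2 stops first, `Z_t` if they stop
simultaneously. -/
def gamePayoff (X Y Z : Ω × ℝ → ℝ) (ω : Ω) (t s : ℝ) : ℝ :=
  if t < s then X (ω, t) else if s < t then Y (ω, s) else Z (ω, t)

instance isProbabilityMeasure_lam : IsProbabilityMeasure lam := by
  constructor
  rw [lam, Measure.restrict_apply_univ, Real.volume_Icc]
  norm_num

theorem measurable_of_forall_mem_Icc {α : Type*} [MeasurableSpace α] {f : α → ℝ} {a b : ℝ}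
    (hf : ∀ x, f x ∈ Icc a b) (h : ∀ t ∈ Icc a b, MeasurableSet {x | f x ≤ t}) :
    Measurable f := by
  refine measurable_of_Iic fun t => ?_
  rcases lt_or_ge t a with hta | hat
  · convert MeasurableSet.empty
    exact eq_empty_of_forall_notMem fun x hx => (hta.trans_le (hf x).1).not_ge hx
  rcases le_or_gt t b with htb | hbt
  · exact h t ⟨hat, htb⟩
  · convert MeasurableSet.univ
    exact eq_univ_of_forall fun x => (hf x).2.trans hbt.le

theorem IsMixedST.measurable {F : ℝ → MeasurableSpace Ω} {T : ℝ} {μ : Ω → ℝ → ℝ}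
    (hle : ∀ t, F t ≤ (inferInstance : MeasurableSpace Ω)) (hμ : IsMixedST F T μ) :
    Measurable fun p : Ω × ℝ => μ p.1 p.2 := by
  refine measurable_of_forall_mem_Icc (fun p => hμ.1 p.1 p.2) fun t ht => ?_
  have hprod : (F t).prod (borel ℝ) ≤ (inferInstance : MeasurableSpace (Ω × ℝ)) :=
    sup_le_sup (MeasurableSpace.comap_mono (hle t))
      (MeasurableSpace.comap_mono BorelSpace.measurable_eq.ge)
  exact hprod _ (hμ.2 t ht)

theorem measure_prod_Iic_eq_of_ae_mem_Icc {δ : Measure (Ω × ℝ)} {T : ℝ}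
    (hδ : ∀ᵐ p ∂δ, p.2 ∈ Icc 0 T) (A : Set Ω) (t : ℝ) :
    δ (A ×ˢ Iic t) = δ (A ×ˢ Icc 0 (min t T)) := by
  refine measure_congr (Filter.eventuallyEq_set.2 ?_)
  filter_upwards [hδ] with p hp
  simp only [mem_prod, mem_Iic, mem_Icc, le_min_iff]
  exact ⟨fun h => ⟨h.1, hp.1, h.2, hp.2⟩, fun h => ⟨h.1, h.2.2.1⟩⟩

theorem generateFrom_prod_Iic :
    MeasurableSpace.generateFrom
        (image2 (· ×ˢ ·) {A : Set Ω | MeasurableSet A} (range Iic)) =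
      (inferInstance : MeasurableSpace (Ω × ℝ)) := by
  refine generateFrom_eq_prod MeasurableSpace.generateFrom_measurableSet
    (borel_eq_generateFrom_Iic ℝ ▸ BorelSpace.measurable_eq).symm
    isCountablySpanning_measurableSet ⟨fun n : ℕ => Iic (n : ℝ), fun n => mem_range_self _, ?_⟩
  exact iUnion_eq_univ_iff.2 fun x => (exists_nat_ge x).imp fun _ hn => hn

theorem Measure.ext_of_prod_Icc {δ₁ δ₂ : Measure (Ω × ℝ)} [IsFiniteMeasure δ₁] {T : ℝ}
    (hT : 0 ≤ T) (h₁ : ∀ᵐ p ∂δ₁, p.2 ∈ Icc 0 T) (h₂ : ∀ᵐ p ∂δ₂, p.2 ∈ Icc 0 T)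
    (h : ∀ A, MeasurableSet A → ∀ t ∈ Icc 0 T, δ₁ (A ×ˢ Icc 0 t) = δ₂ (A ×ˢ Icc 0 t)) :
    δ₁ = δ₂ := by
  have hIic : ∀ A, MeasurableSet A → ∀ t, δ₁ (A ×ˢ Iic t) = δ₂ (A ×ˢ Iic t) := by
    intro A hA t
    rw [measure_prod_Iic_eq_of_ae_mem_Icc h₁, measure_prod_Iic_eq_of_ae_mem_Icc h₂]
    rcases lt_or_ge t 0 with ht | ht
    · rw [Icc_eq_empty (min_le_left t T |>.trans_lt ht).not_ge, prod_empty, measure_empty,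
        measure_empty]
    · exact h A hA _ ⟨le_min ht hT, min_le_right t T⟩
  refine ext_of_generate_finite _ generateFrom_prod_Iic.symm
    (MeasurableSpace.isPiSystem_measurableSet.prod isPiSystem_Iic) ?_ ?_
  · rintro _ ⟨A, hA, _, ⟨t, rfl⟩, rfl⟩
    exact hIic A hA t
  · have hconull : ∀ δ : Measure (Ω × ℝ), (∀ᵐ p ∂δ, p.2 ∈ Icc 0 T) →
        δ univ = δ (univ ×ˢ Iic T) := fun δ hδ => by
      refine measure_congr (Filter.eventuallyEq_set.2 ?_)
      filter_upwards [hδ] with p hp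
      simp [hp.2]
    rw [hconull δ₁ h₁, hconull δ₂ h₂, hIic univ MeasurableSet.univ T]

section

variable {P : Measure Ω} {T : ℝ} {ρ : ℝ → Ω → ℝ} {ν : ProbabilityTheory.Kernel Ω ℝ}

theorem isMarkovKernel_of_measure_Icc_eq (hT : 0 ≤ T) (hρT : ∀ ω, ρ T ω = 1)
    (hν1 : ∀ ω, ∀ t ∈ Icc (0:ℝ) T, ν ω (Icc 0 t) = ENNReal.ofReal (ρ t ω))
    (hν2 : ∀ ω, ν ω (Icc (0:ℝ) T)ᶜ = 0) :
    ProbabilityTheory.IsMarkovKernel ν where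
  isProbabilityMeasure ω := ⟨by
    rw [← measure_add_measure_compl measurableSet_Icc, hν1 ω T ⟨hT, le_rfl⟩, hν2 ω, add_zero,
      hρT ω, ENNReal.ofReal_one]⟩

theorem mixedDist_eq_compProd [IsProbabilityMeasure P] {F : ℝ → MeasurableSpace Ω}
    (hle : ∀ t, F t ≤ (inferInstance : MeasurableSpace Ω)) (hT : 0 ≤ T)
    {μ : Ω → ℝ → ℝ} (hμ : IsMixedST F T μ) (hequiv : IsRandDist P T ρ (mixedDist P μ))
    [ProbabilityTheory.IsMarkovKernel ν]
    (hν1 : ∀ ω, ∀ t ∈ Icc (0:ℝ) T, ν ω (Icc 0 t) = ENNReal.ofReal (ρ t ω))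
    (hν2 : ∀ ω, ν ω (Icc (0:ℝ) T)ᶜ = 0) :
    mixedDist P μ = P.compProd ν := by
  have hmap : Measurable fun p : Ω × ℝ => (p.1, μ p.1 p.2) :=
    measurable_fst.prodMk (hμ.measurable hle)
  have : IsProbabilityMeasure (mixedDist P μ) :=
    Measure.isProbabilityMeasure_map hmap.aemeasurable
  refine Measure.ext_of_prod_Icc hT ?_ ?_ fun A hA t ht => ?_
  · exact (ae_map_iff hmap.aemeasurable (measurable_snd measurableSet_Icc)).2
      (ae_of_all _ fun p => hμ.1 p.1 p.2)
  · refine (Measure.ae_compProd_iff (measurable_snd measurableSet_Icc)).2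
      (ae_of_all _ fun ω => ?_)
    exact measure_eq_zero_iff_ae_notMem.1 (hν2 ω) |>.mono fun _ h => not_not.1 h
  · rw [hequiv A hA t ht, Measure.compProd_apply_prod hA measurableSet_Icc]
    exact setLIntegral_congr_fun hA fun ω _ => (hν1 ω t ht).symm

end

/-- Equivalent mixed and randomized stopping times yield the same payoff in every
stopping problem: `E_{P⊗λ}[R_{μ(ω,r)}(ω)] = E_P[∫_0^T R_t(ω) dρ_t(ω)]`, where the
inner Lebesgue–Stieltjes integral is w.r.t. the measure `ν_ω` of the path
`t ↦ ρ_t(ω)`. -/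
theorem stmt12 (P : Measure Ω) [IsProbabilityMeasure P]
    (F : ℝ → MeasurableSpace Ω)
    (hle : ∀ t : ℝ, F t ≤ (inferInstance : MeasurableSpace Ω))
    (T : ℝ) (hT : 0 ≤ T)
    (μ : Ω → ℝ → ℝ) (hμ : IsMixedST F T μ)
    (ρ : ℝ → Ω → ℝ) (hρ : IsRandomizedST F T ρ)
    (hequiv : IsRandDist P T ρ (mixedDist P μ))
    (ν : ProbabilityTheory.Kernel Ω ℝ)
    (hν1 : ∀ ω, ∀ t ∈ Icc (0:ℝ) T, ν ω (Icc 0 t) = ENNReal.ofReal (ρ t ω))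
    (hν2 : ∀ ω, ν ω (Icc (0:ℝ) T)ᶜ = 0)
    (R : Ω × ℝ → ℝ) (hR : Measurable R) (C : ℝ) (hbd : ∀ q, |R q| ≤ C) :
    ∫ p : Ω × ℝ, R (p.1, μ p.1 p.2) ∂(P.prod lam)
      = ∫ ω, (∫ t, R (ω, t) ∂(ν ω)) ∂P := by
  have := isMarkovKernel_of_measure_Icc_eq hT hρ.2.2.2.2 hν1 hν2
  have hmap : Measurable fun p : Ω × ℝ => (p.1, μ p.1 p.2) :=
    measurable_fst.prodMk (hμ.measurable hle)
  have hint : Integrable R (P.compProd ν) :=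
    .of_bound hR.aestronglyMeasurable C
      (ae_of_all _ fun q => (Real.norm_eq_abs _).trans_le (hbd q))
  calc ∫ p : Ω × ℝ, R (p.1, μ p.1 p.2) ∂(P.prod lam)
      = ∫ q, R q ∂(mixedDist P μ) :=
        (integral_map hmap.aemeasurable hR.aestronglyMeasurable).symm
    _ = ∫ q, R q ∂(P.compProd ν) := by rw [mixedDist_eq_compProd hle hT hμ hequiv hν1 hν2]
    _ = ∫ ω, ∫ t, R (ω, t) ∂(ν ω) ∂P := Measure.integral_compProd hint

end StopEquiv
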